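/- Let α ∈ (0,1) be irrational with convergent denominators q_k. Let L ≥ 1 (or L ≥ 0 if α < 1/2), and let ∥·∥* ∈ {ξ ↦ {ξ}, ξ ↦ {−ξ}} be chosen so that ∥q_L α∥* < 1/2. Then ∥q_L α∥* > ∥(q_L + q_{L+1})α∥* > ⋯ > ∥(q_L + (a_{L+2}−1) q_{L+1})α∥* > ∥q_{L+2} α∥*. -/

import Mathlib

/-- Gauss-map iterates of `α`. -/
noncomputable def cfFrac (α : ℝ) : ℕ → ℝ
  | 0 => α
  | k + 1 => Int.fract (1 / cfFrac α k)

/-- Partial quotients of `α` (1-indexed, `cfA α 0 = 0` unused). -/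
noncomputable def cfA (α : ℝ) : ℕ → ℕ
  | 0 => 0
  | k + 1 => (⌊1 / cfFrac α k⌋).toNat

/-- Numerators of the convergents of `α`. -/
noncomputable def cfP (α : ℝ) : ℕ → ℕ
  | 0 => 0
  | 1 => 1
  | k + 2 => cfA α (k + 2) * cfP α (k + 1) + cfP α k

/-- Denominators of the convergents of `α`. -/
noncomputable def cfQ (α : ℝ) : ℕ → ℕ
  | 0 => 1
  | 1 => cfA α 1
  | k + 2 => cfA α (k + 2) * cfQ α (k + 1) + cfQ α k

/-- Distance from `x` to the nearest integer. -/
noncomputable def distNearInt (x : ℝ) : ℝ := min (Int.fract x) (1 - Int.fract x)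

/-!
Write `θ_k = x_0 x_1 ⋯ x_k` for the product of the Gauss-map iterates `x_0 = α`,
`x_{k+1} = {1 / x_k}`. Then `q_k α - p_k = (-1)^k θ_k` and `θ_{k+2} = θ_k - a_{k+2} θ_{k+1}`,
so `(q_L + a q_{L+1}) α` is an integer plus `(-1)^L (θ_L - a θ_{L+1})`, and for
`0 ≤ a ≤ a_{L+2}` the number `θ_L - a θ_{L+1}` lies in `(0, 1)` and decreases strictly in `a`,
reaching `θ_{L+2}` at `a = a_{L+2}`. Each of `{·}` and `{-·}` maps `n + (-1)^L t` either to `t`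
for all such `t` or to `1 - t` for all such `t`; since `θ_L < 1/2`, the condition
`∥q_L α∥* < 1/2` selects the first alternative.
-/

open Set

noncomputable def cfProd (α : ℝ) (k : ℕ) : ℝ := ∏ i ∈ Finset.range (k + 1), cfFrac α i

lemma Int.fract_intCast_add_of_mem_Ioo {m : ℤ} {t : ℝ} (ht : t ∈ Ioo 0 1) :
    Int.fract ((m : ℝ) + t) = t := by
  rw [Int.fract_intCast_add, Int.fract_eq_self.mpr ⟨ht.1.le, ht.2⟩]

lemma Int.fract_intCast_sub_of_mem_Ioo {m : ℤ} {t : ℝ} (ht : t ∈ Ioo 0 1) :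
    Int.fract ((m : ℝ) - t) = 1 - t := by
  have hft : Int.fract t = t := Int.fract_eq_self.mpr ⟨ht.1.le, ht.2⟩
  rw [sub_eq_add_neg, Int.fract_intCast_add, Int.fract_neg (by rw [hft]; exact ht.1.ne'), hft]

lemma fract_or_fract_neg_add_mul_sign {f : ℝ → ℝ}
    (hf : f = (fun ξ => Int.fract ξ) ∨ f = (fun ξ => Int.fract (-ξ))) {s : ℝ}
    (hs : s = 1 ∨ s = -1) :
    (∀ (m : ℤ) (t : ℝ), t ∈ Ioo 0 1 → f (m + s * t) = t) ∨
      (∀ (m : ℤ) (t : ℝ), t ∈ Ioo 0 1 → f (m + s * t) = 1 - t) := by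
  rcases hf with rfl | rfl <;> rcases hs with rfl | rfl
  · left; intro m t ht
    simpa using Int.fract_intCast_add_of_mem_Ioo (m := m) ht
  · right; intro m t ht
    simpa [sub_eq_add_neg] using Int.fract_intCast_sub_of_mem_Ioo (m := m) ht
  · right; intro m t ht
    have h : -((m : ℝ) + 1 * t) = ((-m : ℤ) : ℝ) - t := by push_cast; ring
    simp only [h, Int.fract_intCast_sub_of_mem_Ioo ht]
  · left; intro m t ht
    have h : -((m : ℝ) + -1 * t) = ((-m : ℤ) : ℝ) + t := by push_cast; ring
    simp only [h, Int.fract_intCast_add_of_mem_Ioo ht]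

section GaussMap

variable {α : ℝ}

lemma irrational_cfFrac (hirr : Irrational α) (k : ℕ) : Irrational (cfFrac α k) := by
  induction k with
  | zero => exact hirr
  | succ k ih =>
    rw [cfFrac, Int.fract]
    exact (one_div (cfFrac α k) ▸ ih.inv).sub_intCast _

lemma cfFrac_succ_pos (hirr : Irrational α) (k : ℕ) : 0 < cfFrac α (k + 1) :=
  (Int.fract_nonneg _).lt_of_ne (irrational_cfFrac hirr (k + 1)).ne_zero.symm

lemma cfFrac_pos (h0 : 0 < α) (hirr : Irrational α) : ∀ k, 0 < cfFrac α k
  | 0 => h0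
  | k + 1 => cfFrac_succ_pos hirr k

lemma cfFrac_lt_one (h1 : α < 1) : ∀ k, cfFrac α k < 1
  | 0 => h1
  | _ + 1 => Int.fract_lt_one _

lemma cfA_succ_eq {k : ℕ} (hk : 0 ≤ cfFrac α k) :
    (cfA α (k + 1) : ℝ) = 1 / cfFrac α k - cfFrac α (k + 1) := by
  have hfloor : 0 ≤ ⌊1 / cfFrac α k⌋ := Int.floor_nonneg.mpr (by positivity)
  rw [cfA, cfFrac, Int.fract, ← Int.cast_natCast, Int.toNat_of_nonneg hfloor]
  ring

lemma one_le_cfA_succ (hα : α ∈ Ioo 0 1) (hirr : Irrational α) (k : ℕ) :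
    1 ≤ cfA α (k + 1) := by
  have hx0 := cfFrac_pos hα.1 hirr k
  have hgt : 1 < 1 / cfFrac α k := by rw [lt_div_iff₀ hx0]; linarith [cfFrac_lt_one hα.2 k]
  have hfloor : 1 ≤ ⌊1 / cfFrac α k⌋ := Int.le_floor.mpr (by exact_mod_cast hgt.le)
  rw [cfA]; omega

lemma cfProd_zero : cfProd α 0 = α := by
  simp [cfProd, cfFrac]

lemma cfProd_succ (k : ℕ) : cfProd α (k + 1) = cfProd α k * cfFrac α (k + 1) :=
  Finset.prod_range_succ _ _

lemma cfProd_pos (h0 : 0 < α) (hirr : Irrational α) (k : ℕ) : 0 < cfProd α k :=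
  Finset.prod_pos fun i _ => cfFrac_pos h0 hirr i

lemma cfProd_strictAnti (hα : α ∈ Ioo 0 1) (hirr : Irrational α) : StrictAnti (cfProd α) :=
  strictAnti_nat_of_succ_lt fun k => by
    rw [cfProd_succ]
    exact mul_lt_of_lt_one_right (cfProd_pos hα.1 hirr k) (cfFrac_lt_one hα.2 _)

lemma cfProd_lt_one (hα : α ∈ Ioo 0 1) (hirr : Irrational α) (k : ℕ) : cfProd α k < 1 := by
  have h := (cfProd_strictAnti hα hirr).antitone k.zero_le
  rw [cfProd_zero] at h
  exact h.trans_lt hα.2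

lemma cfProd_one (h0 : 0 < α) : cfProd α 1 = 1 - cfA α 1 * α := by
  rw [cfProd_succ, cfProd_zero, cfA_succ_eq (k := 0) h0.le]
  simp only [cfFrac]
  field_simp
  ring

lemma cfProd_add_two (hirr : Irrational α) (k : ℕ) :
    cfProd α (k + 2) = cfProd α k - cfA α (k + 2) * cfProd α (k + 1) := by
  have hx : cfFrac α (k + 1) ≠ 0 := (cfFrac_succ_pos hirr k).ne'
  rw [cfProd_succ, cfProd_succ, cfA_succ_eq (cfFrac_succ_pos hirr k).le]
  field_simp
  ring

lemma cfProd_lt_half (hα : α ∈ Ioo 0 1) (hirr : Irrational α) {L : ℕ}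
    (hL : 1 ≤ L ∨ α < 1 / 2) : cfProd α L < 1 / 2 := by
  have hθ₁ : cfProd α 1 < 1 / 2 := by
    have hθ₁_lt : cfProd α 1 < cfProd α 0 := cfProd_strictAnti hα hirr zero_lt_one
    have ha₁ : (1 : ℝ) ≤ cfA α 1 := by exact_mod_cast one_le_cfA_succ hα hirr 0
    rw [cfProd_zero] at hθ₁_lt
    nlinarith [cfProd_one hα.1]
  rcases L.eq_zero_or_pos with rfl | hL₀
  · rw [cfProd_zero]
    exact hL.resolve_left (by omega)
  · exact ((cfProd_strictAnti hα hirr).antitone hL₀).trans_lt hθ₁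

lemma cfQ_mul_sub_cfP (h0 : 0 < α) (hirr : Irrational α) :
    ∀ k, (cfQ α k : ℝ) * α - cfP α k = (-1) ^ k * cfProd α k
  | 0 => by simp [cfQ, cfP, cfProd_zero]
  | 1 => by simp [cfQ, cfP, cfProd_one h0]
  | k + 2 => by
    have ih₀ := cfQ_mul_sub_cfP h0 hirr k
    have ih₁ := cfQ_mul_sub_cfP h0 hirr (k + 1)
    simp only [cfQ, cfP, Nat.cast_add, Nat.cast_mul, cfProd_add_two hirr k]
    linear_combination ih₀ + (cfA α (k + 2) : ℝ) * ih₁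

variable {L : ℕ}

lemma cfQ_add_mul_cfQ_mul_eq (h0 : 0 < α) (hirr : Irrational α) (a : ℕ) :
    ((cfQ α L + a * cfQ α (L + 1) : ℕ) : ℝ) * α =
      ((cfP α L + a * cfP α (L + 1) : ℕ) : ℤ) + (-1) ^ L * (cfProd α L - a * cfProd α (L + 1)) := by
  push_cast
  linear_combination cfQ_mul_sub_cfP h0 hirr L + (a : ℝ) * cfQ_mul_sub_cfP h0 hirr (L + 1)

lemma cfProd_sub_mul_mem_Ioo (hα : α ∈ Ioo 0 1) (hirr : Irrational α) {a : ℕ}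
    (ha : a ≤ cfA α (L + 2)) : cfProd α L - a * cfProd α (L + 1) ∈ Ioo 0 1 := by
  have ha' : (a : ℝ) ≤ cfA α (L + 2) := by exact_mod_cast ha
  have hθ₁ := cfProd_pos hα.1 hirr (L + 1)
  constructor
  · nlinarith [cfProd_pos hα.1 hirr (L + 2), cfProd_add_two hirr L]
  · nlinarith [cfProd_lt_one hα hirr L, a.cast_nonneg (α := ℝ)]

lemma apply_cfQ_add_mul_cfQ_mul (hα : α ∈ Ioo 0 1) (hirr : Irrational α) {f : ℝ → ℝ}
    (hf : ∀ (m : ℤ) (t : ℝ), t ∈ Ioo 0 1 → f (m + (-1) ^ L * t) = t) {a : ℕ}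
    (ha : a ≤ cfA α (L + 2)) :
    f (((cfQ α L + a * cfQ α (L + 1) : ℕ) : ℝ) * α) = cfProd α L - a * cfProd α (L + 1) := by
  rw [cfQ_add_mul_cfQ_mul_eq hα.1 hirr]
  exact hf _ _ (cfProd_sub_mul_mem_Ioo hα hirr ha)

lemma apply_cfQ_add_succ_mul_cfQ_lt (hα : α ∈ Ioo 0 1) (hirr : Irrational α) {f : ℝ → ℝ}
    (hf : ∀ (m : ℤ) (t : ℝ), t ∈ Ioo 0 1 → f (m + (-1) ^ L * t) = t) {a : ℕ}
    (ha : a + 1 ≤ cfA α (L + 2)) :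
    f (((cfQ α L + (a + 1) * cfQ α (L + 1) : ℕ) : ℝ) * α) <
      f (((cfQ α L + a * cfQ α (L + 1) : ℕ) : ℝ) * α) := by
  rw [apply_cfQ_add_mul_cfQ_mul hα hirr hf ha,
    apply_cfQ_add_mul_cfQ_mul hα hirr hf (a.le_succ.trans ha)]
  push_cast
  linarith [cfProd_pos hα.1 hirr (L + 1)]

end GaussMap

theorem stmt13 (α : ℝ) (hα : α ∈ Set.Ioo (0:ℝ) 1) (hirr : Irrational α)
    (L : ℕ) (hL : 1 ≤ L ∨ α < 1 / 2)
    (f : ℝ → ℝ) (hf : f = (fun ξ => Int.fract ξ) ∨ f = (fun ξ => Int.fract (-ξ)))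
    (hfq : f ((cfQ α L : ℝ) * α) < 1 / 2) :
    (∀ a : ℕ, a + 1 < cfA α (L + 2) →
        f (((cfQ α L + (a + 1) * cfQ α (L + 1) : ℕ) : ℝ) * α) <
          f (((cfQ α L + a * cfQ α (L + 1) : ℕ) : ℝ) * α)) ∧
      f ((cfQ α (L + 2) : ℝ) * α) <
        f (((cfQ α L + (cfA α (L + 2) - 1) * cfQ α (L + 1) : ℕ) : ℝ) * α) := by
  obtain heval | heval := fract_or_fract_neg_add_mul_sign hf (neg_one_pow_eq_or ℝ L)
  · have ha₁ := one_le_cfA_succ hα hirr (L + 1)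
    have hq : cfQ α (L + 2) = cfQ α L + (cfA α (L + 2) - 1 + 1) * cfQ α (L + 1) := by
      rw [Nat.sub_add_cancel ha₁, cfQ, add_comm]
    refine ⟨fun a ha => apply_cfQ_add_succ_mul_cfQ_lt hα hirr heval ha.le, ?_⟩
    rw [hq]
    exact apply_cfQ_add_succ_mul_cfQ_lt hα hirr heval (Nat.sub_add_cancel ha₁).le
  · have hqL : (cfQ α L : ℝ) * α = (cfP α L : ℤ) + (-1) ^ L * cfProd α L := by
      push_cast
      linear_combination cfQ_mul_sub_cfP hα.1 hirr L
    rw [hqL, heval _ _ ⟨cfProd_pos hα.1 hirr L, cfProd_lt_one hα hirr L⟩] at hfq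
    linarith [cfProd_lt_half hα hirr hL]
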